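/- Let Σ = {0,1} and for 0 ≤ p ≤ 1 let Γ_{1,p} = {μ ∈ P(Σ^{[2]}) : μ(11) ≤ p} be the one-dimensional (0,1,p)-RLL semiconstrained system. Then the internal independence entropy of Γ_{1,p} satisfies h_ind(Γ_{1,p}) ≥ sup{ (1/2)(H₂(x) + H₂(y)) : x, y ∈ [0,1], x·y ≤ p }, where H₂(t) = −t·log₂ t − (1−t)·log₂(1−t) is the binary entropy function. -/

import Mathlib

open scoped BigOperators
open Filter

noncomputable section

namespace SCS

/-- Probability measures on a finite type, as normalized nonnegative functions. -/
def PM (X : Type*) [Fintype X] : Type _ :=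
  {f : X → ℝ // (∀ x, 0 ≤ f x) ∧ ∑ x, f x = 1}

variable {X Y : Type*} [Fintype X] [Fintype Y]

/-- Pushforward of a finite probability measure under a map. -/
def push [DecidableEq Y] (f : X → Y) (μ : PM X) : PM Y :=
  ⟨fun y => ∑ x ∈ Finset.univ.filter fun x => f x = y, μ.1 x,
    fun y => Finset.sum_nonneg fun x _ => μ.2.1 x,
    by rw [Finset.sum_fiberwise Finset.univ f μ.1]; exact μ.2.2⟩

/-- Total variation distance between finite probability measures. -/
def tv (μ ν : PM X) : ℝ :=
  ⨆ W : Finset X, |∑ x ∈ W, μ.1 x - ∑ x ∈ W, ν.1 x|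

/-- The closed `ε`-ball around a set of measures:
`μ` is in the ball iff the infimum of TV-distances from `μ` to `Γ` is at most `ε`. -/
def ball (Γ : Set (PM X)) (ε : ℝ) : Set (PM X) :=
  {μ | ∀ ε' > ε, ∃ ν ∈ Γ, tv μ ν < ε'}

/-- Base-2 entropy of a finite probability measure. -/
def entropy (μ : PM X) : ℝ := -∑ x, μ.1 x * Real.logb 2 (μ.1 x)

/-- The uniform measure. -/
def uniformPM (X : Type*) [Fintype X] [Nonempty X] : PM X :=
  ⟨fun _ => (Fintype.card X : ℝ)⁻¹, fun _ => by positivity, by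
    have h : (Fintype.card X : ℝ) ≠ 0 := Nat.cast_ne_zero.mpr Fintype.card_ne_zero
    simp [Finset.sum_const, Finset.card_univ, nsmul_eq_mul, mul_inv_cancel₀ h]⟩

open Classical in
/-- The uniform measure on a finset (junk value if the finset is empty). -/
def uniformOn [Nonempty X] (s : Finset X) : PM X :=
  if h : s.Nonempty then
    ⟨fun x => if x ∈ s then (s.card : ℝ)⁻¹ else 0,
      fun x => by dsimp only; split <;> positivity,
      by
        have hc : (s.card : ℝ) ≠ 0 := ne_of_gt (by exact_mod_cast Finset.card_pos.mpr h)
        rw [Finset.sum_ite_mem, Finset.univ_inter, Finset.sum_const, nsmul_eq_mul,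
          mul_inv_cancel₀ hc]⟩
  else uniformPM X

/-- Convex combination of two measures. -/
def mix (t : ℝ) (h0 : 0 ≤ t) (h1 : t ≤ 1) (μ ν : PM X) : PM X :=
  ⟨fun x => t * μ.1 x + (1 - t) * ν.1 x,
    fun x => add_nonneg (mul_nonneg h0 (μ.2.1 x)) (mul_nonneg (by linarith) (ν.2.1 x)),
    by rw [Finset.sum_add_distrib, ← Finset.mul_sum, ← Finset.mul_sum, μ.2.2, ν.2.2]; ring⟩

/-- Convexity of a set of measures. -/
def IsConvexPM (Γ : Set (PM X)) : Prop :=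
  ∀ μ ∈ Γ, ∀ ν ∈ Γ, ∀ t, ∀ (h0 : 0 ≤ t) (h1 : t ≤ 1), mix t h0 h1 μ ν ∈ Γ

open Classical in
/-- Average of a finite family of measures (junk value for an empty family). -/
def avgPM {ι : Type*} [Fintype ι] (X : Type*) [Fintype X] [Nonempty X] (f : ι → PM X) : PM X :=
  if h : Nonempty ι then
    ⟨fun x => (∑ i, (f i).1 x) / Fintype.card ι,
      fun x => div_nonneg (Finset.sum_nonneg fun i _ => (f i).2.1 x) (Nat.cast_nonneg _),
      by
        haveI := h
        have hc : (Fintype.card ι : ℝ) ≠ 0 := Nat.cast_ne_zero.mpr Fintype.card_ne_zero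
        rw [← Finset.sum_div, Finset.sum_comm, Finset.sum_congr rfl fun i _ => (f i).2.2,
          Finset.sum_const, Finset.card_univ, nsmul_eq_mul, mul_one, div_self hc]⟩
  else uniformPM X

/-- Product measure with given single-site marginals. -/
def prodPM {ι : Type*} [Fintype ι] [DecidableEq ι] {A : Type*} [Fintype A] (p : ι → PM A) :
    PM (ι → A) :=
  ⟨fun w => ∏ i, (p i).1 (w i),
    fun w => Finset.prod_nonneg fun i _ => (p i).2.1 _,
    by
      classical
      rw [show (Finset.univ : Finset (ι → A)) = Fintype.piFinset fun _ => Finset.univ from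
        (Fintype.piFinset_univ).symm, ← Finset.prod_univ_sum]
      exact Finset.prod_eq_one fun i _ => (p i).2.2⟩

variable {A : Type*} [Fintype A] [DecidableEq A] [Nonempty A]

/-- Single-site marginal of a measure on words. -/
def site {ι : Type*} [Fintype ι] [DecidableEq ι] (μ : PM (ι → A)) (i : ι) : PM A :=
  push (fun w => w i) μ

/-- A measure on words is a product (independent) measure. -/
def IsProduct {ι : Type*} [Fintype ι] [DecidableEq ι] (μ : PM (ι → A)) : Prop :=
  ∀ w, μ.1 w = ∏ i, (site μ i).1 (w i)

/-- Cyclic (mod `n`) addition of an integer vector to a point of `F_n^d`. -/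
def cycAdd {d n : ℕ} (v : Fin d → Fin n) (u : Fin d → ℤ) : Fin d → Fin n := fun i =>
  ⟨(((v i : ℤ) + u i) % (n : ℤ)).toNat, by
    have h0 : 0 < n := (v i).pos
    have h1 : (0 : ℤ) < (n : ℤ) := by exact_mod_cast h0
    have h2 := Int.emod_nonneg ((v i : ℤ) + u i) (by omega : (n : ℤ) ≠ 0)
    have h3 := Int.emod_lt_of_pos ((v i : ℤ) + u i) h1
    omega⟩

/-- The marginal of a measure on `Σ^{F_n^d}` on the coordinates `g(T) + v` (mod `n`),
viewed as a measure on `Σ^T`. -/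
def margAlong {d n : ℕ} (μ : PM ((Fin d → Fin n) → A)) {T : Type*} [Fintype T] [DecidableEq T]
    (g : T → (Fin d → ℤ)) (v : Fin d → Fin n) : PM (T → A) :=
  push (fun w t => w (cycAdd v (g t))) μ

/-- `π̂`: the average over all translates of the `g`-marginal. -/
def avgMarg {d n : ℕ} (μ : PM ((Fin d → Fin n) → A)) {T : Type*} [Fintype T] [DecidableEq T]
    (g : T → (Fin d → ℤ)) : PM (T → A) :=
  avgPM _ fun v : Fin d → Fin n => margAlong μ g v

/-- The empirical distribution of `g`-patterns in the word `w`, with positions mod `n`. -/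
def empAlong {d n : ℕ} (w : (Fin d → Fin n) → A) {T : Type*} [Fintype T] [DecidableEq T]
    (g : T → (Fin d → ℤ)) : PM (T → A) := by
  by_cases h : Nonempty (Fin d → Fin n)
  · exact push (fun v t => w (cycAdd v (g t))) (uniformPM _)
  · exact uniformPM _

open Classical in
/-- The admissible `n`-blocks of the semiconstrained system `Γ` (patterns indexed by `T`
via `g : T → ℤ^d`). -/
def blocksG {d : ℕ} {T : Type*} [Fintype T] [DecidableEq T] (g : T → (Fin d → ℤ))
    (Γ : Set (PM (T → A))) (n : ℕ) : Finset ((Fin d → Fin n) → A) :=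
  Finset.univ.filter fun w => empAlong w g ∈ Γ

/-- The capacity of a semiconstrained system. -/
def xcapG {d : ℕ} {T : Type*} [Fintype T] [DecidableEq T] (g : T → (Fin d → ℤ))
    (Γ : Set (PM (T → A))) : ℝ :=
  ⨅ ε : {e : ℝ // 0 < e},
    Filter.limsup
      (fun n : ℕ => Real.logb 2 ((blocksG g (ball Γ ε.1) n).card) / (n : ℝ) ^ d) Filter.atTop

/-- Product measures whose averaged marginal lies in `Γ`. -/
def PbarG {d : ℕ} {T : Type*} [Fintype T] [DecidableEq T] (g : T → (Fin d → ℤ))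
    (Γ : Set (PM (T → A))) (n : ℕ) : Set (PM ((Fin d → Fin n) → A)) :=
  {μ | IsProduct μ ∧ avgMarg μ g ∈ Γ}

/-- The internal independence entropy. -/
def hindG {d : ℕ} {T : Type*} [Fintype T] [DecidableEq T] (g : T → (Fin d → ℤ))
    (Γ : Set (PM (T → A))) : ℝ :=
  Filter.limsup
    (fun n : ℕ => sSup ((fun μ => entropy μ / (n : ℝ) ^ d) '' PbarG g Γ n)) Filter.atTop

/-- The independence entropy. -/
def hindBarG {d : ℕ} {T : Type*} [Fintype T] [DecidableEq T] (g : T → (Fin d → ℤ))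
    (Γ : Set (PM (T → A))) : ℝ :=
  ⨅ ε : {e : ℝ // 0 < e}, hindG g (ball Γ ε.1)

/-- The point `j·e_i ∈ ℤ^d`. -/
def axialPoint {d : ℕ} (k : ℕ) (i : Fin d) (j : Fin k) : Fin d → ℤ :=
  fun i' => if i' = i then (j : ℤ) else 0

/-- The set `S = ⋃_{i∈[d]} [k]·e_i ⊆ ℤ^d`. -/
def axialSet (d k : ℕ) : Finset (Fin d → ℤ) :=
  Finset.univ.biUnion fun i : Fin d => Finset.univ.image (axialPoint k i)

lemma axialPoint_mem {d k : ℕ} (i : Fin d) (j : Fin k) : axialPoint k i j ∈ axialSet d k :=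
  Finset.mem_biUnion.mpr ⟨i, Finset.mem_univ _, Finset.mem_image_of_mem _ (Finset.mem_univ _)⟩

/-- The inclusion of `S = ⋃_i [k]e_i` into `ℤ^d`. -/
def valS (d k : ℕ) : {v // v ∈ axialSet d k} → (Fin d → ℤ) := Subtype.val

/-- Identification of `Σ^{[k]e_i}` with `Σ^{[k]}`: restriction of a configuration on `S`
to the `i`-th axis. -/
def axialRestr {d k : ℕ} (i : Fin d) (x : {v // v ∈ axialSet d k} → A) : Fin k → A :=
  fun j => x ⟨axialPoint k i j, axialPoint_mem i j⟩

/-- The `d`-axial product of a one-dimensional SCS, as a set of measures on `Σ^S`. -/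
def axialProdS {k : ℕ} (d : ℕ) (Γ : Set (PM (Fin k → A))) :
    Set (PM ({v // v ∈ axialSet d k} → A)) :=
  {μ | ∀ i : Fin d, push (axialRestr i) μ ∈ Γ}

/-- The embedding `[k] → ℤ^1`. -/
def oneG (k : ℕ) : Fin k → (Fin 1 → ℤ) := fun j _ => (j : ℤ)

/-- The embedding `F_k^d → ℤ^d`. -/
def cubeG (d k : ℕ) : (Fin d → Fin k) → (Fin d → ℤ) := fun u i => (u i : ℤ)

/-- Identification of `Σ^{[k]e_i}` with `Σ^{[k]}` inside `Σ^{F_k^d}`. -/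
def cubeRestr {d k : ℕ} (i : Fin d) (x : (Fin d → Fin k) → A) : Fin k → A :=
  fun j => x fun i' => if i' = i then j else ⟨0, j.pos⟩

/-- The `d`-axial product of a one-dimensional SCS, viewed inside `P(Σ^{F_k^d})`. -/
def axialProdC {k : ℕ} (d : ℕ) (Γ : Set (PM (Fin k → A))) :
    Set (PM ((Fin d → Fin k) → A)) :=
  {μ | ∀ i : Fin d, push (cubeRestr i) μ ∈ Γ}

/-- The weak `d`-axial product of a one-dimensional SCS, viewed inside `P(Σ^{F_k^d})`. -/
def weakAxialC {k : ℕ} (d : ℕ) (Γ : Set (PM (Fin k → A))) :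
    Set (PM ((Fin d → Fin k) → A)) :=
  {μ | avgPM _ (fun i : Fin d => push (cubeRestr i) μ) ∈ Γ}

/-- `P̃_n(Γ^⊠d)`: product measures whose direction-averaged `[k]`-marginal lies in `Γ`. -/
def PtildeG {k : ℕ} (d : ℕ) (Γ : Set (PM (Fin k → A))) (n : ℕ) :
    Set (PM ((Fin d → Fin n) → A)) :=
  {μ | IsProduct μ ∧ avgPM _ (fun i : Fin d => avgMarg μ (axialPoint k i)) ∈ Γ}

/-- `h̃_ind(Γ^⊠d)`, the relaxed independence entropy of the weak axial product. -/
def htildeG {k : ℕ} (d : ℕ) (Γ : Set (PM (Fin k → A))) : ℝ :=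
  ⨅ ε : {e : ℝ // 0 < e},
    Filter.limsup
      (fun n : ℕ => sSup ((fun μ => entropy μ / (n : ℝ) ^ d) '' PtildeG d (ball Γ ε.1) n))
      Filter.atTop

open Classical in
/-- `B_n(Γ^⊗d)`: the admissible blocks of the `d`-axial product. -/
def axialBlocks {k : ℕ} (Γ : Set (PM (Fin k → A))) (d n : ℕ) :
    Finset ((Fin d → Fin n) → A) :=
  Finset.univ.filter fun w => ∀ i : Fin d, empAlong w (axialPoint k i) ∈ Γ

/-- `μ_{y,A}`: the uniform measure on the admissible blocks agreeing with `y` on `A'`. -/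
def muYA {k : ℕ} (Γ : Set (PM (Fin k → A))) (d n : ℕ) (A' : Finset (Fin d → Fin n))
    (y : (Fin d → Fin n) → A) : PM ((Fin d → Fin n) → A) :=
  uniformOn ((axialBlocks Γ d n).filter fun x => ∀ v ∈ A', x v = y v)

/-- `η_{y,A}`: the product of the single-site marginals of `μ_{y,A}`. -/
def etaYA {k : ℕ} (Γ : Set (PM (Fin k → A))) (d n : ℕ) (A' : Finset (Fin d → Fin n))
    (y : (Fin d → Fin n) → A) : PM ((Fin d → Fin n) → A) :=
  prodPM fun v => site (muYA Γ d n A' y) v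

open Classical in
/-- The probability of an event. -/
def probOf (P : PM X) (E : Set X) : ℝ := ∑ x, if x ∈ E then P.1 x else 0

/-- Expectation of a real function. -/
def expect (P : PM X) (F : X → ℝ) : ℝ := ∑ x, P.1 x * F x

open Classical in
/-- Conditional measure given an event (junk value `P` itself for null events). -/
def condPM (P : PM X) (E : Set X) : PM X :=
  if h : 0 < probOf P E then
    ⟨fun x => (if x ∈ E then P.1 x else 0) / probOf P E,
      fun x => div_nonneg (by by_cases hx : x ∈ E <;> simp [hx] <;> exact P.2.1 x) (le_of_lt h),
      by rw [← Finset.sum_div]; rw [show (∑ x, if x ∈ E then P.1 x else 0) = probOf P E from rfl];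
         exact div_self (ne_of_gt h)⟩
  else P

/-- `[−j]e_i + v = {v − e_i, …, v − j·e_i}` (coordinates mod `n`). -/
def segNeg {d n : ℕ} (i : Fin d) (v : Fin d → Fin n) (j : ℕ) : Finset (Fin d → Fin n) :=
  (Finset.range j).image fun l : ℕ => cycAdd v fun i' => if i' = i then -((l : ℤ) + 1) else 0


/-- The binary entropy function. -/
def H2 (t : ℝ) : ℝ := -(t * Real.logb 2 t) - (1 - t) * Real.logb 2 (1 - t)

/-! ### Auxiliary material for Statement 16 -/

section AuxRLL

variable {ι A' : Type*} [Fintype ι] [DecidableEq ι] [Fintype A'] [DecidableEq A']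

set_option linter.unusedSectionVars false

lemma sum_prod_pi (f : ι → A' → ℝ) :
    ∑ w : ι → A', ∏ i, f i (w i) = ∏ i, ∑ a, f i a := by
  rw [Finset.prod_univ_sum]
  rw [Fintype.piFinset_univ]

lemma lemA (f : ι → A' → ℝ) (hsum : ∀ i, ∑ a, f i a = 1) (S : Finset ι) (σ : ι → A') :
    ∑ w : ι → A', (if (∀ i ∈ S, w i = σ i) then ∏ i, f i (w i) else 0)
      = ∏ i ∈ S, f i (σ i) := by
  have key : ∀ w : ι → A', (if (∀ i ∈ S, w i = σ i) then ∏ i, f i (w i) else 0)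
      = ∏ i, (if i ∈ S then (if w i = σ i then f i (w i) else 0) else f i (w i)) := by
    intro w
    by_cases h : ∀ i ∈ S, w i = σ i
    · rw [if_pos h]
      refine Finset.prod_congr rfl fun i _ => ?_
      by_cases hi : i ∈ S
      · simp [hi, h i hi]
      · simp [hi]
    · rw [if_neg h]
      push_neg at h
      obtain ⟨i0, hi0, hne⟩ := h
      symm
      apply Finset.prod_eq_zero (Finset.mem_univ i0)
      simp [hi0, hne]
  rw [Finset.sum_congr rfl fun w _ => key w,
    sum_prod_pi (fun i a => if i ∈ S then (if a = σ i then f i a else 0) else f i a)]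
  have h2 : ∀ i, (∑ a, if i ∈ S then (if a = σ i then f i a else 0) else f i a)
      = if i ∈ S then f i (σ i) else 1 := by
    intro i
    by_cases hi : i ∈ S
    · simp [hi]
    · simp [hi, hsum i]
  rw [Finset.prod_congr rfl fun i _ => h2 i, Finset.prod_ite_mem, Finset.univ_inter]

lemma sum_negMulLog_prod (f : ι → A' → ℝ) (hsum : ∀ i, ∑ a, f i a = 1) :
    ∑ w : ι → A', Real.negMulLog (∏ i, f i (w i)) = ∑ i, ∑ a, Real.negMulLog (f i a) := by
  have pt : ∀ w : ι → A', Real.negMulLog (∏ i, f i (w i))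
      = -∑ i, (∏ j, f j (w j)) * Real.log (f i (w i)) := by
    intro w
    by_cases hz : ∃ i, f i (w i) = 0
    · obtain ⟨i0, hi0⟩ := hz
      have hp : (∏ j, f j (w j)) = 0 := Finset.prod_eq_zero (Finset.mem_univ i0) hi0
      simp [hp]
    · push_neg at hz
      rw [Real.negMulLog, Real.log_prod fun i _ => hz i, Finset.mul_sum]
      simp
  rw [Finset.sum_congr rfl fun w _ => pt w, Finset.sum_neg_distrib, Finset.sum_comm]
  have inner : ∀ i, (∑ w : ι → A', (∏ j, f j (w j)) * Real.log (f i (w i)))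
      = ∑ a, f i a * Real.log (f i a) := by
    intro i
    have pt2 : ∀ w : ι → A', (∏ j, f j (w j)) * Real.log (f i (w i))
        = ∏ j, (if j = i then f j (w j) * Real.log (f j (w j)) else f j (w j)) := by
      intro w
      rw [Finset.prod_eq_prod_diff_singleton_mul (Finset.mem_univ i),
          Finset.prod_eq_prod_diff_singleton_mul (Finset.mem_univ i)
            (fun j => if j = i then f j (w j) * Real.log (f j (w j)) else f j (w j))]
      rw [if_pos rfl, Finset.prod_congr rfl
        (fun j hj => if_neg (Finset.notMem_singleton.mp (Finset.mem_sdiff.mp hj).2))]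
      ring
    rw [Finset.sum_congr rfl fun w _ => pt2 w,
      sum_prod_pi (fun j a => if j = i then f j a * Real.log (f j a) else f j a)]
    rw [Finset.prod_eq_single_of_mem i (Finset.mem_univ i)
      (fun j _ hj => by simp [hj, hsum j])]
    simp
  rw [Finset.sum_congr rfl fun i _ => inner i]
  simp [Real.negMulLog, neg_mul]

lemma entropy_eq_sum_negMulLog {X : Type*} [Fintype X] (μ : PM X) :
    entropy μ = (∑ x, Real.negMulLog (μ.1 x)) / Real.log 2 := by
  have h : ∀ x : X, μ.1 x * Real.logb 2 (μ.1 x)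
      = -(Real.negMulLog (μ.1 x) / Real.log 2) := by
    intro x; rw [Real.negMulLog, Real.logb]; ring
  rw [entropy, Finset.sum_congr rfl fun x _ => h x, Finset.sum_neg_distrib, neg_neg,
    ← Finset.sum_div]

lemma entropy_le_logb_card {X : Type*} [Fintype X] (μ : PM X) :
    entropy μ ≤ Real.logb 2 (Fintype.card X) := by
  have hne : Nonempty X := by
    by_contra h
    rw [not_nonempty_iff] at h
    have h2 := μ.2.2
    simp [Finset.univ_eq_empty] at h2
  have hN : 0 < (Fintype.card X : ℝ) := by exact_mod_cast Fintype.card_pos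
  have hj := Real.concaveOn_negMulLog.le_map_sum (t := Finset.univ)
    (w := fun _ : X => (Fintype.card X : ℝ)⁻¹) (p := fun x => μ.1 x)
    (fun i _ => by positivity)
    (by rw [Finset.sum_const, Finset.card_univ, nsmul_eq_mul, mul_inv_cancel₀ (ne_of_gt hN)])
    (fun i _ => μ.2.1 i)
  rw [show (∑ x, (Fintype.card X : ℝ)⁻¹ • μ.1 x) = (Fintype.card X : ℝ)⁻¹ by
      rw [← Finset.smul_sum, μ.2.2, smul_eq_mul, mul_one]] at hj
  rw [show Real.negMulLog (Fintype.card X : ℝ)⁻¹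
      = (Fintype.card X : ℝ)⁻¹ * Real.log (Fintype.card X) by
    rw [Real.negMulLog, Real.log_inv]; ring] at hj
  simp only [smul_eq_mul, ← Finset.mul_sum] at hj
  have h3 : ∑ x, Real.negMulLog (μ.1 x) ≤ Real.log (Fintype.card X) :=
    le_of_mul_le_mul_left (by exact hj) (by positivity)
  rw [entropy_eq_sum_negMulLog, Real.logb]
  have hlog2 : (0:ℝ) < Real.log 2 := Real.log_pos one_lt_two
  exact div_le_div_of_nonneg_right h3 hlog2.le

end AuxRLL
section ConstrRLL

set_option linter.unusedSectionVars false

/-- Bernoulli measure on `Bool`. -/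
def bern (t : ℝ) (h0 : 0 ≤ t) (h1 : t ≤ 1) : PM Bool :=
  ⟨fun b => if b then t else 1 - t,
    fun b => by dsimp only; split <;> linarith,
    by rw [Fintype.sum_bool]; norm_num⟩

variable {ι A' : Type*} [Fintype ι] [DecidableEq ι] [Fintype A'] [DecidableEq A']

lemma site_prodPM (f : ι → PM A') (u : ι) (a : A') :
    (site (prodPM f) u).1 a = (f u).1 a := by
  change (∑ w ∈ Finset.univ.filter fun w : ι → A' => w u = a, ∏ i, (f i).1 (w i))
    = (f u).1 a
  rw [Finset.sum_filter]
  have h : ∀ w : ι → A', (if w u = a then ∏ i, (f i).1 (w i) else 0)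
      = (if (∀ i ∈ ({u} : Finset ι), w i = (fun _ : ι => a) i)
          then ∏ i, (f i).1 (w i) else 0) := by
    intro w; simp
  rw [Finset.sum_congr rfl fun w _ => h w,
    lemA (fun i => (f i).1) (fun i => (f i).2.2) {u} (fun _ => a)]
  simp

lemma isProduct_prodPM (f : ι → PM A') : IsProduct (prodPM f) := by
  intro w
  change (∏ i, (f i).1 (w i)) = _
  exact Finset.prod_congr rfl fun i _ => (site_prodPM f i (w i)).symm

lemma entropy_prodPM (f : ι → PM A') :
    entropy (prodPM f) = (∑ i, ∑ a, Real.negMulLog ((f i).1 a)) / Real.log 2 := by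
  rw [entropy_eq_sum_negMulLog]
  have h : (∑ w : ι → A', Real.negMulLog ((prodPM f).1 w))
      = ∑ w : ι → A', Real.negMulLog (∏ i, (f i).1 (w i)) := rfl
  rw [h, sum_negMulLog_prod (fun i => (f i).1) (fun i => (f i).2.2)]

lemma marg_prodPM {n : ℕ} (f : (Fin 1 → Fin n) → PM Bool) (v : Fin 1 → Fin n)
    (hne : cycAdd v (oneG 2 0) ≠ cycAdd v (oneG 2 1)) :
    (margAlong (prodPM f) (oneG 2) v).1 (fun _ => true)
      = (f (cycAdd v (oneG 2 0))).1 true * (f (cycAdd v (oneG 2 1))).1 true := by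
  change (∑ w ∈ Finset.univ.filter fun w : (Fin 1 → Fin n) → Bool =>
      (fun t : Fin 2 => w (cycAdd v (oneG 2 t))) = fun _ => true, ∏ i, (f i).1 (w i)) = _
  rw [Finset.sum_filter]
  have hiff : ∀ w : (Fin 1 → Fin n) → Bool,
      ((fun t : Fin 2 => w (cycAdd v (oneG 2 t))) = fun _ => true)
        ↔ (∀ i ∈ ({cycAdd v (oneG 2 0), cycAdd v (oneG 2 1)} : Finset (Fin 1 → Fin n)),
            w i = (fun _ : Fin 1 → Fin n => true) i) := by
    intro w
    rw [funext_iff]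
    constructor
    · intro h i hi
      rcases Finset.mem_insert.mp hi with h0 | h1
      · exact h0 ▸ h 0
      · rw [Finset.mem_singleton] at h1; exact h1 ▸ h 1
    · intro h t
      fin_cases t
      · exact h (cycAdd v (oneG 2 0)) (by simp)
      · exact h (cycAdd v (oneG 2 1)) (by simp)
  rw [Finset.sum_congr rfl fun w _ => if_congr (hiff w) rfl rfl,
    lemA (fun i => (f i).1) (fun i => (f i).2.2)
      {cycAdd v (oneG 2 0), cycAdd v (oneG 2 1)} (fun _ => true),
    Finset.prod_pair hne]

lemma cycAdd_val {n : ℕ} (v : Fin 1 → Fin n) (u : Fin 1 → ℤ) (i : Fin 1) (hu : 0 ≤ u i) :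
    (cycAdd v u i).val = ((v i).val + (u i).toNat) % n := by
  show ((((v i : ℤ)) + u i) % (n : ℤ)).toNat = ((v i).val + (u i).toNat) % n
  have h1 : ((v i : ℤ)) + u i = (((v i).val + (u i).toNat : ℕ) : ℤ) := by
    push_cast [Int.toNat_of_nonneg hu]
    rfl
  rw [h1, ← Int.natCast_mod, Int.toNat_natCast]

lemma cycAdd_zero {n : ℕ} (v : Fin 1 → Fin n) : cycAdd v (oneG 2 0) = v := by
  funext i
  apply Fin.ext
  rw [cycAdd_val v _ i (by simp [oneG])]
  simp [oneG, Nat.mod_eq_of_lt (v i).2]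

lemma cycAdd_one_val {n : ℕ} (v : Fin 1 → Fin n) (i : Fin 1) :
    (cycAdd v (oneG 2 1) i).val = ((v i).val + 1) % n := by
  rw [cycAdd_val v _ i (by simp [oneG])]
  norm_num [oneG]

lemma succ_mod_ne {m a : ℕ} (hm : 0 < m) (ha : a < 2 * m) :
    (a + 1) % (2 * m) ≠ a ∧ ((a + 1) % (2 * m)) % 2 ≠ a % 2 := by
  rcases Nat.lt_or_ge (a + 1) (2 * m) with h | h
  · rw [Nat.mod_eq_of_lt h]; omega
  · have h2 : a + 1 = 2 * m := by omega
    rw [h2, Nat.mod_self]; omega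

/-- Alternating values. -/
def tval (x y : ℝ) (j : ℕ) : ℝ := if j % 2 = 0 then x else y

lemma tval_mem {x y : ℝ} (hx0 : 0 ≤ x) (hx1 : x ≤ 1) (hy0 : 0 ≤ y) (hy1 : y ≤ 1) (j : ℕ) :
    0 ≤ tval x y j ∧ tval x y j ≤ 1 := by
  unfold tval; split <;> exact ⟨‹_›, ‹_›⟩

lemma tval_mul {x y : ℝ} {a b : ℕ} (h : b % 2 ≠ a % 2) :
    tval x y a * tval x y b = x * y := by
  unfold tval
  rcases Nat.mod_two_eq_zero_or_one a with h1 | h1 <;>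
    rcases Nat.mod_two_eq_zero_or_one b with h2 | h2 <;>
      simp [h1, h2] at h ⊢ <;> ring

end ConstrRLL
section MainRLL

set_option linter.unusedSectionVars false

variable {x y : ℝ}

/-- Site marginals of the alternating product measure. -/
def altF (x y : ℝ) (hx0 : 0 ≤ x) (hx1 : x ≤ 1) (hy0 : 0 ≤ y) (hy1 : y ≤ 1) (n : ℕ) :
    (Fin 1 → Fin n) → PM Bool :=
  fun v => bern (tval x y (v 0).val) (tval_mem hx0 hx1 hy0 hy1 _).1
    (tval_mem hx0 hx1 hy0 hy1 _).2

lemma bern_true (t : ℝ) (h0 : 0 ≤ t) (h1 : t ≤ 1) : (bern t h0 h1).1 true = t := by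
  simp [bern]

lemma sum_negMulLog_bern (t : ℝ) (h0 : 0 ≤ t) (h1 : t ≤ 1) :
    ∑ a : Bool, Real.negMulLog ((bern t h0 h1).1 a) = H2 t * Real.log 2 := by
  have hlog2 : Real.log 2 ≠ 0 := ne_of_gt (Real.log_pos one_lt_two)
  rw [Fintype.sum_bool]
  simp only [bern, if_true, Bool.false_eq_true, if_false, H2, Real.negMulLog, Real.logb]
  field_simp
  ring

lemma sum_range_alt (c d : ℝ) (m : ℕ) :
    ∑ j ∈ Finset.range (2 * m), (if j % 2 = 0 then c else d) = m * c + m * d := by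
  induction m with
  | zero => simp
  | succ k ih =>
    have h : 2 * (k + 1) = (2 * k) + 1 + 1 := by ring
    rw [h, Finset.sum_range_succ, Finset.sum_range_succ, ih]
    have h1 : (2 * k) % 2 = 0 := by omega
    have h2 : (2 * k + 1) % 2 = 1 := by omega
    rw [if_pos h1, if_neg (by omega : ¬ (2 * k + 1) % 2 = 0)]
    push_cast
    ring

variable (hx0 : 0 ≤ x) (hx1 : x ≤ 1) (hy0 : 0 ≤ y) (hy1 : y ≤ 1)

lemma alt_ne {m : ℕ} (hm : 0 < m) (v : Fin 1 → Fin (2 * m)) :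
    cycAdd v (oneG 2 0) ≠ cycAdd v (oneG 2 1) := by
  rw [cycAdd_zero]
  intro h
  have h0 := congrArg (fun w => (w 0).val) h
  rw [cycAdd_one_val] at h0
  exact (succ_mod_ne hm (v 0).2).1 h0.symm

lemma alt_marg {m : ℕ} (hm : 0 < m) (v : Fin 1 → Fin (2 * m)) :
    (margAlong (prodPM (altF x y hx0 hx1 hy0 hy1 (2 * m))) (oneG 2) v).1 (fun _ => true)
      = x * y := by
  rw [marg_prodPM _ v (alt_ne hm v), cycAdd_zero]
  show tval x y ((v 0).val) * tval x y ((cycAdd v (oneG 2 1) 0).val) = x * y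
  rw [cycAdd_one_val]
  exact tval_mul (succ_mod_ne hm (v 0).2).2

lemma alt_avgMarg {m : ℕ} (hm : 0 < m) :
    (avgMarg (prodPM (altF x y hx0 hx1 hy0 hy1 (2 * m))) (oneG 2)).1 (fun _ => true)
      = x * y := by
  have hne : Nonempty (Fin 1 → Fin (2 * m)) := ⟨fun _ => ⟨0, by omega⟩⟩
  have hcard : (Fintype.card (Fin 1 → Fin (2 * m)) : ℝ) = (2 * m : ℕ) := by
    rw [Fintype.card_fun]
    simp
  rw [avgMarg, avgPM]
  erw [dif_pos hne]
  show (∑ v, (margAlong (prodPM (altF x y hx0 hx1 hy0 hy1 (2 * m))) (oneG 2) v).1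
      (fun _ => true)) / (Fintype.card (Fin 1 → Fin (2 * m)) : ℝ) = x * y
  rw [Finset.sum_congr rfl fun v _ => alt_marg hx0 hx1 hy0 hy1 hm v,
    Finset.sum_const, Finset.card_univ, nsmul_eq_mul, hcard]
  have hm' : ((2 * m : ℕ) : ℝ) ≠ 0 := by positivity
  field_simp

lemma alt_entropy {m : ℕ} :
    entropy (prodPM (altF x y hx0 hx1 hy0 hy1 (2 * m))) = m * H2 x + m * H2 y := by
  have hlog2 : Real.log 2 ≠ 0 := ne_of_gt (Real.log_pos one_lt_two)
  rw [entropy_prodPM]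
  rw [Finset.sum_congr rfl fun v _ =>
    sum_negMulLog_bern (tval x y (v 0).val) _ _]
  rw [← Finset.sum_mul, mul_div_assoc, div_self hlog2, mul_one]
  have he : (∑ v : Fin 1 → Fin (2 * m), H2 (tval x y (v 0).val))
      = ∑ j : Fin (2 * m), H2 (tval x y j.val) := by
    apply Fintype.sum_equiv (Equiv.funUnique (Fin 1) (Fin (2 * m)))
    intro v
    rfl
  rw [he, Fin.sum_univ_eq_sum_range (fun j => H2 (tval x y j))]
  have ht : ∀ j, H2 (tval x y j) = if j % 2 = 0 then H2 x else H2 y := by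
    intro j; unfold tval; split <;> rfl
  rw [Finset.sum_congr rfl fun j _ => ht j, sum_range_alt]

lemma elem_le_one (p : ℝ) (Γ' : Set (PM (Fin 2 → Bool))) (n : ℕ) :
    ∀ z ∈ (fun μ : PM ((Fin 1 → Fin n) → Bool) => entropy μ / (n : ℝ) ^ 1) ''
      PbarG (oneG 2) Γ' n, z ≤ 1 := by
  rintro z ⟨μ, _, rfl⟩
  rcases Nat.eq_zero_or_pos n with h | h
  · simp [h]
  · have hb := entropy_le_logb_card μ
    have hcard : (Fintype.card ((Fin 1 → Fin n) → Bool)) = 2 ^ n := by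
      rw [Fintype.card_fun, Fintype.card_fun]
      simp
    rw [hcard] at hb
    have hlb : Real.logb 2 ((2 : ℕ) ^ n : ℕ) = n := by
      push_cast
      rw [Real.logb_pow, Real.logb_self_eq_one (by norm_num)]
      simp
    rw [hlb] at hb
    rw [pow_one]
    rw [div_le_one (by exact_mod_cast h)]
    exact hb

lemma main_xy (p : ℝ) (hx0 : 0 ≤ x) (hx1 : x ≤ 1) (hy0 : 0 ≤ y) (hy1 : y ≤ 1)
    (hxy : x * y ≤ p) :
    (H2 x + H2 y) / 2 ≤ hindG (oneG 2) {μ : PM (Fin 2 → Bool) | μ.1 (fun _ => true) ≤ p} := by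
  rw [hindG]
  apply Filter.le_limsup_of_frequently_le
  · rw [Filter.frequently_atTop]
    intro N
    refine ⟨2 * (N + 1), by omega, ?_⟩
    apply le_csSup ⟨1, fun z hz => elem_le_one p _ _ z hz⟩
    refine ⟨prodPM (altF x y hx0 hx1 hy0 hy1 (2 * (N + 1))), ⟨isProduct_prodPM _, ?_⟩, ?_⟩
    · show (avgMarg _ (oneG 2)).1 (fun _ => true) ≤ p
      rw [alt_avgMarg hx0 hx1 hy0 hy1 (by omega : 0 < N + 1)]
      exact hxy
    · show entropy _ / ((2 * (N + 1) : ℕ) : ℝ) ^ 1 = (H2 x + H2 y) / 2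
      rw [alt_entropy hx0 hx1 hy0 hy1, pow_one]
      have : ((2 * (N + 1) : ℕ) : ℝ) = 2 * ((N + 1 : ℕ) : ℝ) := by push_cast; ring
      rw [this]
      have hN : ((N + 1 : ℕ) : ℝ) ≠ 0 := by positivity
      field_simp
  · apply Filter.isBoundedUnder_of
    refine ⟨1, fun n => ?_⟩
    exact Real.sSup_le (elem_le_one p _ n) zero_le_one

end MainRLL
/-- Lower bound on the internal independence entropy of the
one-dimensional `(0,1,p)`-RLL semiconstrained system. -/
theorem hind_RLL_lower_bound (p : ℝ) (hp0 : 0 ≤ p) (hp1 : p ≤ 1) :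
    sSup ((fun q : ℝ × ℝ => (H2 q.1 + H2 q.2) / 2) ''
        {q : ℝ × ℝ | q.1 ∈ Set.Icc (0 : ℝ) 1 ∧ q.2 ∈ Set.Icc (0 : ℝ) 1 ∧ q.1 * q.2 ≤ p}) ≤
      hindG (oneG 2) {μ : PM (Fin 2 → Bool) | μ.1 (fun _ => true) ≤ p} := by
  have h0 : (0 : ℝ) ≤ hindG (oneG 2) {μ : PM (Fin 2 → Bool) | μ.1 (fun _ => true) ≤ p} := by
    have h := main_xy (x := 0) (y := 0) p le_rfl zero_le_one le_rfl zero_le_one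
      (by simpa using hp0)
    have hH : H2 0 = 0 := by simp [H2]
    rw [hH] at h
    simpa using h
  apply Real.sSup_le _ h0
  rintro z ⟨⟨x, y⟩, ⟨⟨hx0, hx1⟩, ⟨hy0, hy1⟩, hxy⟩, rfl⟩
  exact main_xy p hx0 hx1 hy0 hy1 hxy

end SCS
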